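/- In the multi-specialist single-bargain game with quadratic costs (k₀ = kᵢ = 2 for all i), the δ ∈ [0,1] maximizing U_G(δ) = (n²/(4c₀))δ² + δ(1-δ)Σᵢ 1/(2cᵢ) equals (Σᵢ 1/cᵢ)/(2Σᵢ 1/cᵢ - n²/c₀) when Σᵢ c₀/cᵢ > n², and equals 1 otherwise. -/

import Mathlib

/-! Writing `a = n²/(4c₀)` and `b = (Σᵢ 1/cᵢ)/2`, the utility is the quadratic
`U_G(δ) = a δ² + b δ(1-δ) = b δ - (b - a) δ²`. The condition `Σᵢ c₀/cᵢ > n²` says exactly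
`2a < b`. Then `a < b`, so the parabola is concave and its vertex `b/(2(b-a))`, which is the
stated maximizer, is a maximum on all of `ℝ`. If `b ≤ 2a`, then
`U_G(1) - U_G(δ) = (1-δ)((1-δ)a + δ(2a-b))`, and both factors are nonnegative on `[0,1]`. -/

open Finset Set

section Quadratic

variable (a b : ℝ)

theorem isMaxOn_quadratic_vertex (hab : a < b) (s : Set ℝ) :
    IsMaxOn (fun δ => a * δ ^ 2 + δ * (1 - δ) * b) s (b / (2 * (b - a))) := by
  intro x _
  have hba : 0 < b - a := sub_pos.2 hab
  have hgap : (a * (b / (2 * (b - a))) ^ 2 + b / (2 * (b - a)) * (1 - b / (2 * (b - a))) * b)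
      - (a * x ^ 2 + x * (1 - x) * b) = (b - a) * (x - b / (2 * (b - a))) ^ 2 := by
    field_simp
    ring
  show a * x ^ 2 + x * (1 - x) * b ≤ _
  linarith [mul_nonneg hba.le (sq_nonneg (x - b / (2 * (b - a))))]

theorem isMaxOn_quadratic_one (ha : 0 ≤ a) (hab : b ≤ 2 * a) :
    IsMaxOn (fun δ => a * δ ^ 2 + δ * (1 - δ) * b) (Icc 0 1) 1 := by
  rintro x ⟨hx0, hx1⟩
  have hgap : (a * 1 ^ 2 + 1 * (1 - 1) * b) - (a * x ^ 2 + x * (1 - x) * b)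
      = (1 - x) * ((1 - x) * a + x * (2 * a - b)) := by ring
  have hfactor : 0 ≤ (1 - x) * a + x * (2 * a - b) := by
    have := sub_nonneg.2 hab
    positivity
  show a * x ^ 2 + x * (1 - x) * b ≤ _
  linarith [mul_nonneg (sub_nonneg.2 hx1) hfactor]

end Quadratic

theorem stmt13_general (n : ℕ) (c0 : ℝ) (c : Fin n → ℝ)
    (hc0 : 0 < c0)
    (UG : ℝ → ℝ)
    (hUG : UG = fun δ => ((n : ℝ) ^ 2 / (4 * c0)) * δ ^ 2
      + δ * (1 - δ) * ∑ i, 1 / (2 * c i)) :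
    ((n : ℝ) ^ 2 < ∑ i, c0 / c i →
      IsMaxOn UG (Set.Icc 0 1)
        ((∑ i, 1 / c i) / (2 * (∑ i, 1 / c i) - (n : ℝ) ^ 2 / c0))) ∧
    (∑ i, c0 / c i ≤ (n : ℝ) ^ 2 → IsMaxOn UG (Set.Icc 0 1) 1) := by
  set S := ∑ i, 1 / c i
  have hhalf : ∑ i, 1 / (2 * c i) = S / 2 := by
    rw [sum_div]
    exact sum_congr rfl fun i _ => by rw [div_div, mul_comm]
  have hscale : ∑ i, c0 / c i = c0 * S := by
    simp only [S, mul_sum, mul_one_div]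
  rw [hhalf] at hUG
  rw [hscale]
  subst hUG
  refine ⟨fun h => ?_, fun h => ?_⟩
  · have hab : (n : ℝ) ^ 2 / (4 * c0) < S / 2 := by
      rw [div_lt_iff₀ (by positivity)]; linarith [sq_nonneg (n : ℝ)]
    convert isMaxOn_quadratic_vertex _ _ hab (Icc 0 1) using 1
    rw [show 2 * (S / 2 - (n : ℝ) ^ 2 / (4 * c0)) = (2 * S - (n : ℝ) ^ 2 / c0) / 2 by
      field_simp; ring, div_div_div_cancel_right₀ two_ne_zero]
  · refine isMaxOn_quadratic_one _ _ (by positivity) ?_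
    calc S / 2 = c0 * S / (2 * c0) := by field_simp
      _ ≤ (n : ℝ) ^ 2 / (2 * c0) := by gcongr
      _ = 2 * ((n : ℝ) ^ 2 / (4 * c0)) := by field_simp; ring

/-- Powerful-G solution in the multi-specialist single-bargain game with quadratic
costs: `U_G` is maximized on `[0,1]` at `(Σᵢ 1/cᵢ)/(2Σᵢ 1/cᵢ - n²/c₀)` when
`Σᵢ c₀/cᵢ > n²`, and at `1` otherwise. -/
theorem stmt13 (n : ℕ) (hn : 1 ≤ n) (c0 : ℝ) (c : Fin n → ℝ)
    (hc0 : 0 < c0) (hc : ∀ i, 0 < c i)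
    (UG : ℝ → ℝ)
    (hUG : UG = fun δ => ((n : ℝ) ^ 2 / (4 * c0)) * δ ^ 2
      + δ * (1 - δ) * ∑ i, 1 / (2 * c i)) :
    ((n : ℝ) ^ 2 < ∑ i, c0 / c i →
      IsMaxOn UG (Set.Icc 0 1)
        ((∑ i, 1 / c i) / (2 * (∑ i, 1 / c i) - (n : ℝ) ^ 2 / c0))) ∧
    (∑ i, c0 / c i ≤ (n : ℝ) ^ 2 → IsMaxOn UG (Set.Icc 0 1) 1) :=
  stmt13_general n c0 c hc0 UG hUG
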